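/- Let k₀ > 0 and let L : [−k₀, k₀] → ℂ be continuously differentiable with L(−k₀) = conj(L(k₀)). Set ν := −L(k₀)/(2π). Then for every k ∈ ℂ with Im k ≠ 0, exp( (1/(2πi)) ∫_{−k₀}^{k₀} L(s)/(s − k) ds ) = exp( iν · Log(k − k₀) − i·conj(ν)·Log(k + k₀) + χ̃(k) ), where χ̃(k) := −(1/(2πi)) ∫_{−k₀}^{k₀} Log(k − s) · L'(s) ds and Log denotes the principal branch of the logarithm; that is, δ(k) = (k − k₀)^{iν} (k + k₀)^{−i conj(ν)} e^{χ̃(k)}. (This is the representation (3.14) of δ obtained by integration by parts.) -/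

import Mathlib

/-!
For `Im k ≠ 0` the point `k` lies off the real line, so `s ↦ Log (k - s)` is a smooth primitive
of `s ↦ 1 / (s - k)` on the segment (`k - s` never meets the branch cut). Integration by parts
gives
`∫ L(s)/(s - k) ds = L(k₀) Log(k - k₀) - L(-k₀) Log(k + k₀) - ∫ Log(k - s) L'(s) ds`,
and the symmetry `L(-k₀) = conj L(k₀)` turns the boundary terms into
`2πi (iν Log(k - k₀) - i conj(ν) Log(k + k₀))`. The power form is `z ^ w = exp (w Log z)`.
-/

open Set MeasureTheory

noncomputable section

/-- `χ̃(k) = -(1/(2πi)) ∫_{-k₀}^{k₀} Log(k - s) L'(s) ds`. -/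
def chiTilde (k₀ : ℝ) (L' : ℝ → ℂ) (k : ℂ) : ℂ :=
  -(2 * Real.pi * Complex.I)⁻¹ *
    ∫ s in (-k₀)..k₀, Complex.log (k - (s : ℂ)) * L' s

open Complex

lemma ofReal_ne_of_im_ne_zero {k : ℂ} (hk : k.im ≠ 0) (x : ℝ) : (x : ℂ) ≠ k :=
  fun h => hk (by simpa using (congrArg im h).symm)

lemma hasDerivAt_log_sub_ofReal {k : ℂ} (hk : k.im ≠ 0) (x : ℝ) :
    HasDerivAt (fun s : ℝ => log (k - s)) ((x - k)⁻¹) x := by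
  have hslit : k - x ∈ slitPlane := Or.inr (by simpa using hk)
  have hinner : HasDerivAt (fun s : ℝ => k - s) (-1) x := by
    simpa using (ofRealCLM.hasDerivAt (x := x)).const_sub k
  have := (hasDerivAt_log hslit).comp x hinner
  rwa [mul_neg_one, ← inv_neg, neg_sub] at this

theorem integral_div_ofReal_sub_eq_by_parts {a b : ℝ} {k : ℂ} (hk : k.im ≠ 0)
    {L L' : ℝ → ℂ}
    (hderiv : ∀ s ∈ uIcc a b, HasDerivWithinAt L (L' s) (uIcc a b) s)
    (hint : IntervalIntegrable L' volume a b) :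
    ∫ s in a..b, L s / (s - k) =
      L b * log (k - b) - L a * log (k - a) - ∫ s in a..b, log (k - s) * L' s := by
  have hinv : IntervalIntegrable (fun s : ℝ => ((s : ℂ) - k)⁻¹) volume a b :=
    (continuous_ofReal.sub continuous_const).inv₀
      (fun x => sub_ne_zero.mpr (ofReal_ne_of_im_ne_zero hk x)) |>.intervalIntegrable a b
  have := intervalIntegral.integral_mul_deriv_eq_deriv_mul_of_hasDerivWithinAt hderiv
    (fun x _ => (hasDerivAt_log_sub_ofReal hk x).hasDerivWithinAt) hint hinv
  simpa only [div_eq_mul_inv, mul_comm (L' _)] using this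

lemma exp_mul_log_sub_mul_log_add {x y : ℂ} (hx : x ≠ 0) (hy : y ≠ 0) (a b c : ℂ) :
    exp (a * log x - b * log y + c) = x ^ a * y ^ (-b) * exp c := by
  rw [cpow_def_of_ne_zero hx, cpow_def_of_ne_zero hy, ← exp_add, ← exp_add]
  ring_nf

/-- Representation (3.14): for Im k ≠ 0, with ν = -L(k₀)/(2π),
δ(k) = exp(iν Log(k-k₀) - i conj(ν) Log(k+k₀) + χ̃(k))
     = (k-k₀)^{iν} (k+k₀)^{-i conj ν} e^{χ̃(k)},
obtained by integration by parts (uses L(-k₀) = conj(L(k₀))). -/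
theorem delta_representation (k₀ : ℝ) (hk₀ : 0 < k₀) (L L' : ℝ → ℂ)
    (hderiv : ∀ s ∈ Icc (-k₀) k₀, HasDerivWithinAt L (L' s) (Icc (-k₀) k₀) s)
    (hcont : ContinuousOn L' (Icc (-k₀) k₀))
    (hsym : L (-k₀) = starRingEnd ℂ (L k₀)) :
    ∀ k : ℂ, k.im ≠ 0 →
      Complex.exp ((2 * Real.pi * Complex.I)⁻¹ *
          ∫ s in (-k₀)..k₀, L s / ((s : ℂ) - k)) =
        Complex.exp (Complex.I * (-L k₀ / (2 * Real.pi)) * Complex.log (k - (k₀ : ℂ))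
          - Complex.I * starRingEnd ℂ (-L k₀ / (2 * Real.pi)) * Complex.log (k + (k₀ : ℂ))
          + chiTilde k₀ L' k) ∧
      Complex.exp ((2 * Real.pi * Complex.I)⁻¹ *
          ∫ s in (-k₀)..k₀, L s / ((s : ℂ) - k)) =
        (k - (k₀ : ℂ)) ^ (Complex.I * (-L k₀ / (2 * Real.pi))) *
          (k + (k₀ : ℂ)) ^ (-(Complex.I * starRingEnd ℂ (-L k₀ / (2 * Real.pi)))) *
          Complex.exp (chiTilde k₀ L' k) := by
  intro k hk
  have hIcc : uIcc (-k₀) k₀ = Icc (-k₀) k₀ := uIcc_of_le (by linarith)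
  have hconj : starRingEnd ℂ (-L k₀ / (2 * Real.pi)) = -L (-k₀) / (2 * Real.pi) := by
    rw [hsym]
    simp [map_div₀, map_ofNat]
  have hexponent : (2 * Real.pi * I)⁻¹ * ∫ s in (-k₀)..k₀, L s / (s - k) =
      I * (-L k₀ / (2 * Real.pi)) * log (k - k₀)
        - I * starRingEnd ℂ (-L k₀ / (2 * Real.pi)) * log (k + k₀) + chiTilde k₀ L' k := by
    rw [integral_div_ofReal_sub_eq_by_parts hk (hIcc ▸ hderiv)
      ((hIcc ▸ hcont).intervalIntegrable), chiTilde, hconj]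
    push_cast
    rw [sub_neg_eq_add]
    field_simp
    linear_combination (L k₀ * log (k - k₀) - L (-k₀) * log (k + k₀)) * I_mul_I
  have hminus : k - k₀ ≠ 0 := sub_ne_zero.mpr (ofReal_ne_of_im_ne_zero hk k₀).symm
  have hplus : k + k₀ ≠ 0 := by
    simpa using sub_ne_zero.mpr (ofReal_ne_of_im_ne_zero hk (-k₀)).symm
  refine ⟨by rw [hexponent], ?_⟩
  rw [hexponent, exp_mul_log_sub_mul_log_add hminus hplus]
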